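/- Let μ be a partition of n whose diagram contains (3,3,3) as a subdiagram. Then there exists a partition λ of n and a Yamanouchi word w of content λ such that inv_μ(w) = 0 and w jams μ. Explicitly, placing 1's in all cells of μ except the first cell of the second row and the first three cells of the third row, and filling those four remaining cells with 3,2,3,2 in row reading order, yields such a w. -/

import Mathlib

open scoped Classical

/-- Swap the values `a` and `b` in a word. -/
def swapVals (a b : ℕ) (w : List ℕ) : List ℕ :=
  w.map fun x => if x = a then b else if x = b then a else x

/-- Elementary dual equivalence `d_i`: acts as the identity if `i` lies (positionally)
between `i-1` and `i+1`, and otherwise swaps `i` with the outermost of `i-1`, `i+1`. -/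
def delem (i : ℕ) (w : List ℕ) : List ℕ :=
  let p := w.idxOf (i - 1)
  let q := w.idxOf i
  let r := w.idxOf (i + 1)
  if (p < q ∧ q < r) ∨ (r < q ∧ q < p) then w
  else if (q < p ∧ p < r) ∨ (r < p ∧ p < q) then swapVals i (i + 1) w
  else swapVals i (i - 1) w

/-- The cyclic replacement `a ↦ b ↦ c ↦ a` on the letters of a word. -/
def cycVals (a b c : ℕ) (w : List ℕ) : List ℕ :=
  w.map fun x => if x = a then b else if x = b then c else if x = c then a else x

/-- The map `d̃_i`: identity if `i` lies between `i-1` and `i+1`, otherwise it cyclically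
permutes the values `i-1, i, i+1` as in Assaf's construction. -/
def dtil (i : ℕ) (w : List ℕ) : List ℕ :=
  let p := w.idxOf (i - 1)
  let q := w.idxOf i
  let r := w.idxOf (i + 1)
  if (p < q ∧ q < r) ∨ (r < q ∧ q < p) then w
  else if q < p ∧ q < r then
    (if p < r then cycVals i (i - 1) (i + 1) w else cycVals i (i + 1) (i - 1) w)
  else
    (if p < r then cycVals (i - 1) i (i + 1) w else cycVals (i + 1) i (i - 1) w)

/-- The standardization of a word: rank letters by value, ties broken left to right. -/
def stWord (w : List ℕ) : List ℕ :=
  ((List.range w.length).zip w).map fun p =>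
    1 + (((List.range w.length).zip w).filter fun q => q.2 < p.2 ∨ (q.2 = p.2 ∧ q.1 < p.1)).length

/-- Unstandardization of a permutation: the value `i` is replaced by
`1 +` the number of `j < i` such that `j+1` occurs before `j`. -/
def unstPerm (π : List ℕ) : List ℕ :=
  π.map fun i =>
    1 + ((List.range (i - 1)).filter fun j => π.idxOf (j + 2) < π.idxOf (j + 1)).length

/-- Unstandardization of a word. -/
def unstWord (w : List ℕ) : List ℕ := unstPerm (stWord w)

/-- RSK row insertion of a value into a tableau (rows listed bottom row first). -/
def insertTab : List (List ℕ) → ℕ → List (List ℕ)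
  | [], x => [[x]]
  | r :: rs, x =>
    match r.findIdx? (fun y => x < y) with
    | none => (r ++ [x]) :: rs
    | some j => r.set j x :: insertTab rs (r.getD j 0)

/-- The RSK insertion tableau of a word. -/
def Ptab (w : List ℕ) : List (List ℕ) := w.foldl insertTab []

def UtabAux : ℕ → List ℕ → List (List ℕ)
  | _, [] => []
  | s, a :: rest => ((List.range a).map (· + s + 1)) :: UtabAux (s + a) rest

/-- The superstandard tableau `U_λ`: `1,…,n` filled along the rows of `λ`, bottom row first. -/
def Utab (lam : List ℕ) : List (List ℕ) := (UtabAux 0 lam).filter (· ≠ [])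

/-- `w` is a Yamanouchi word of content `lam`. -/
def IsYam (lam : List ℕ) (w : List ℕ) : Prop :=
  (∀ x ∈ w, 1 ≤ x) ∧
  (∀ i : ℕ, w.count (i + 1) = lam.getD i 0) ∧
  ∀ t : List ℕ, t <:+ w → ∀ i : ℕ, t.count (i + 2) ≤ t.count (i + 1)

/-- `lam` is a partition: weakly decreasing with positive parts. -/
def IsPartition (lam : List ℕ) : Prop :=
  lam.Pairwise (· ≥ ·) ∧ ∀ a ∈ lam, 0 < a

/-- Row reading word of a tableau (rows listed bottom first; read top row first). -/
def rwTab (T : List (List ℕ)) : List ℕ := T.reverse.flatten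

def fillAux : List ℕ → List ℕ → List (List ℕ)
  | [], _ => []
  | a :: rest, w => w.take a :: fillAux rest (w.drop a)

/-- Fill a shape (row lengths, bottom row first) with a word read in row reading order. -/
def fillTab (sh : List ℕ) (w : List ℕ) : List (List ℕ) := (fillAux sh.reverse w).reverse

/-- `T` is a standard Young tableau of partition shape (rows listed bottom first). -/
def IsSYT (T : List (List ℕ)) : Prop :=
  (T.map List.length).Pairwise (· ≥ ·) ∧ (∀ r ∈ T, r ≠ []) ∧
  (rwTab T).Perm (List.range' 1 (rwTab T).length) ∧
  (∀ r ∈ T, r.Pairwise (· < ·)) ∧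
  ∀ k, k + 1 < T.length → ∀ j < (T.getD (k + 1) []).length,
    (T.getD k []).getD j 0 < (T.getD (k + 1) []).getD j 0

/-- An elementary dual equivalence move on tableaux, via the row reading word. -/
def DEMove (T T' : List (List ℕ)) : Prop :=
  ∃ i, 1 < i ∧ i < (rwTab T).length ∧
    T' = fillTab (T.map List.length) (delem i (rwTab T))

/-- Dual equivalence of tableaux: the equivalence relation generated by the moves `d_i`. -/
def DualEquiv : List (List ℕ) → List (List ℕ) → Prop := Relation.EqvGen DEMove

/-- Row reading order on cells `(x, y)` of `ℤ × ℤ` (top rows first, left to right). -/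
def ReadingOrder (c d : ℤ × ℤ) : Prop := d.2 < c.2 ∨ (c.2 = d.2 ∧ c.1 < d.1)

/-- A diagram, presented as its list of cells in row reading order. -/
def IsDiagramList (δ : List (ℤ × ℤ)) : Prop := δ.Pairwise ReadingOrder

def leRO (c d : ℤ × ℤ) : Prop := c = d ∨ ReadingOrder c d

/-- `e` lies in the pistol of the cell `c`: between `c` and the position one row below `c`. -/
def InPistol (c e : ℤ × ℤ) : Prop := leRO c e ∧ leRO e (c.1, c.2 - 1)

/-- A set of indices (into the row reading order of `δ`) lies in a common pistol of `δ`. -/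
def Pistoled (δ : List (ℤ × ℤ)) (S : List ℕ) : Prop :=
  ∃ c ∈ δ, ∀ i ∈ S, i < δ.length ∧ InPistol c (δ.getD i (0, 0))

/-- The involution `D_i^δ` of Assaf. -/
noncomputable def Ddelta (δ : List (ℤ × ℤ)) (i : ℕ) (π : List ℕ) : List ℕ :=
  if Pistoled δ [π.idxOf (i - 1), π.idxOf i, π.idxOf (i + 1)] then dtil i π
  else delem i π

/-- The cell at index `j` of the filling `T_δ(w)` is a descent. -/
def IsDescentAt (δ : List (ℤ × ℤ)) (w : List ℕ) (j : ℕ) : Prop :=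
  j < δ.length ∧ ∃ k < δ.length,
    δ.getD k (0, 0) = ((δ.getD j (0, 0)).1, (δ.getD j (0, 0)).2 - 1) ∧
    w.getD k 0 < w.getD j 0

/-- The set of descent cells of the filling `T_δ(w)`. -/
def DesSet (δ : List (ℤ × ℤ)) (w : List ℕ) : Set (ℤ × ℤ) :=
  {c | ∃ j, j < δ.length ∧ δ.getD j (0, 0) = c ∧ IsDescentAt δ w j}

/-- Number of cells of `δ` strictly above `c` in its column. -/
def legOf (δ : List (ℤ × ℤ)) (c : ℤ × ℤ) : ℕ :=
  (δ.filter fun e => e.1 = c.1 ∧ c.2 < e.2).length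

/-- The major index statistic `maj_δ`. -/
noncomputable def majD (δ : List (ℤ × ℤ)) (w : List ℕ) : ℕ :=
  ∑ j ∈ Finset.range δ.length,
    if IsDescentAt δ w j then 1 + legOf δ (δ.getD j (0, 0)) else 0

/-- Indices `j < k` form an inversion triple of `T_δ(w)` (with the cell below `j`). -/
def InvTripleAt (δ : List (ℤ × ℤ)) (w : List ℕ) (j k : ℕ) : Prop :=
  j < k ∧ k < δ.length ∧
  (δ.getD j (0, 0)).2 = (δ.getD k (0, 0)).2 ∧
  ∃ m < δ.length, δ.getD m (0, 0) = ((δ.getD j (0, 0)).1, (δ.getD j (0, 0)).2 - 1) ∧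
    ((w.getD m 0 < w.getD k 0 ∧ w.getD k 0 < w.getD j 0) ∨
     (w.getD j 0 ≤ w.getD m 0 ∧ w.getD m 0 < w.getD k 0) ∨
     (w.getD k 0 < w.getD j 0 ∧ w.getD j 0 ≤ w.getD m 0))

/-- Inversion pair where the cell below the left cell is missing. -/
def InvPairBelowAt (δ : List (ℤ × ℤ)) (w : List ℕ) (j k : ℕ) : Prop :=
  j < k ∧ k < δ.length ∧
  (δ.getD j (0, 0)).2 = (δ.getD k (0, 0)).2 ∧
  ((δ.getD j (0, 0)).1, (δ.getD j (0, 0)).2 - 1) ∉ δ ∧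
  w.getD k 0 < w.getD j 0

/-- Inversion pair where the upper-left cell of the triple is missing. -/
def InvPairAboveAt (δ : List (ℤ × ℤ)) (w : List ℕ) (k m : ℕ) : Prop :=
  k < δ.length ∧ m < δ.length ∧
  (δ.getD k (0, 0)).2 = (δ.getD m (0, 0)).2 + 1 ∧
  (δ.getD m (0, 0)).1 < (δ.getD k (0, 0)).1 ∧
  ((δ.getD m (0, 0)).1, (δ.getD m (0, 0)).2 + 1) ∉ δ ∧
  w.getD m 0 < w.getD k 0

/-- The inversion statistic `inv_δ(w)`: inversion triples plus inversion pairs. -/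
noncomputable def invD (δ : List (ℤ × ℤ)) (w : List ℕ) : ℕ :=
  ((Finset.range δ.length ×ˢ Finset.range δ.length).filter fun p =>
      InvTripleAt δ w p.1 p.2).card +
  ((Finset.range δ.length ×ˢ Finset.range δ.length).filter fun p =>
      InvPairBelowAt δ w p.1 p.2).card +
  ((Finset.range δ.length ×ˢ Finset.range δ.length).filter fun p =>
      InvPairAboveAt δ w p.1 p.2).card

/-- The cells of the (French) partition diagram of `lam`, in row reading order. -/
def partitionDiagram (lam : List ℕ) : List (ℤ × ℤ) :=
  ((List.range lam.length).reverse.map fun r =>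
    (List.range (lam.getD r 0)).map fun x => ((x : ℤ), (r : ℤ))).flatten

/-- Index (in `w`) of the `j`-th from last occurrence of the value `v` (`j ≥ 1`). -/
def posFromLast (w : List ℕ) (v j : ℕ) : ℕ :=
  (((List.range w.length).filter fun p => w.getD p 0 = v).reverse).getD (j - 1) 0

/-- A Yamanouchi word `w` jams the diagram `δ`. -/
def Jams (δ : List (ℤ × ℤ)) (w : List ℕ) : Prop :=
  ∃ i j : ℕ, 1 ≤ i ∧ 1 ≤ j ∧ j ≤ w.count i ∧ j + 1 ≤ w.count (i + 1) ∧
    Pistoled δ [posFromLast w i j, posFromLast w (i + 1) (j + 1)]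

/-- `p` occurs as a strict pattern of `π` at the (increasing) index list `idx`. -/
def StrictPatternAt (p : List ℕ) (π : List ℕ) (idx : List ℕ) : Prop :=
  idx.Pairwise (· < ·) ∧ (∀ i ∈ idx, i < π.length) ∧ idx.length = p.length ∧
  ∃ k : ℕ, ∀ j < p.length, π.getD (idx.getD j 0) 0 = p.getD j 0 + k

/-- `γ` is a realizable descent set of `δ`. -/
def RealizableIn (γ : Finset (ℤ × ℤ)) (δ : List (ℤ × ℤ)) : Prop :=
  (∀ c ∈ γ, ((c.1, c.2 - 1) : ℤ × ℤ) ∈ δ) ∧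
  ∀ x₁ x₂ lo hi : ℤ, x₁ < x₂ → lo < hi →
    ((x₁, hi) : ℤ × ℤ) ∉ γ → ((x₁, lo) : ℤ × ℤ) ∉ γ →
    (∀ j, lo < j → j < hi → ((x₁, j) : ℤ × ℤ) ∈ γ) →
    ¬ ∀ j, lo < j → j ≤ hi → ((x₂, j) : ℤ × ℤ) ∈ γ

/-- Value of the leading filling at a cell: `1` plus the length of the maximal run of
cells of `γ` weakly below `c` in its column, i.e. `1` off a non-`γ` cell, and one plus
the value below on cells of `γ`. -/
noncomputable def wval (γ : Finset (ℤ × ℤ)) (c : ℤ × ℤ) : ℕ :=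
  1 + ((Finset.range γ.card).filter fun m =>
    ∀ l ≤ m, ((c.1, c.2 - (l : ℤ)) : ℤ × ℤ) ∈ γ).card


-- ===== auxiliary development =====

namespace Jam333

noncomputable def fcell : ℤ × ℤ → ℕ := fun c =>
  if c = ((0 : ℤ), (2 : ℤ)) ∨ c = ((2 : ℤ), (2 : ℤ)) then 3
  else if c = ((1 : ℤ), (2 : ℤ)) ∨ c = ((0 : ℤ), (1 : ℤ)) then 2 else 1

lemma fcell_pos (c : ℤ × ℤ) : 1 ≤ fcell c := by
  unfold fcell; split_ifs <;> omega

lemma fcell_le (c : ℤ × ℤ) : fcell c ≤ 3 := by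
  unfold fcell; split_ifs <;> omega

lemma fcell_eq_three {c : ℤ × ℤ} (h : fcell c = 3) :
    c = ((0 : ℤ), (2 : ℤ)) ∨ c = ((2 : ℤ), (2 : ℤ)) := by
  by_contra hc
  push_neg at hc
  unfold fcell at h
  split_ifs at h with h1 h2
  · exact absurd h1 (by tauto)
  · omega
  · omega

lemma fcell_eq_two {c : ℤ × ℤ} (h : fcell c = 2) :
    c = ((1 : ℤ), (2 : ℤ)) ∨ c = ((0 : ℤ), (1 : ℤ)) := by
  unfold fcell at h
  split_ifs at h with h1 h2
  · omega
  · exact h2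
  · omega

lemma fcell_eq_one_of {u v : ℤ} (h2 : v = 2 → 3 ≤ u) (h1 : v = 1 → 1 ≤ u) :
    fcell (u, v) = 1 := by
  have e1 : (u, v) ≠ ((0 : ℤ), (2 : ℤ)) := by
    intro h; rw [Prod.ext_iff] at h; simp at h; have := h2 h.2; omega
  have e2 : (u, v) ≠ ((2 : ℤ), (2 : ℤ)) := by
    intro h; rw [Prod.ext_iff] at h; simp at h; have := h2 h.2; omega
  have e3 : (u, v) ≠ ((1 : ℤ), (2 : ℤ)) := by
    intro h; rw [Prod.ext_iff] at h; simp at h; have := h2 h.2; omega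
  have e4 : (u, v) ≠ ((0 : ℤ), (1 : ℤ)) := by
    intro h; rw [Prod.ext_iff] at h; simp at h; have := h1 h.2; omega
  simp [fcell, e1, e2, e3, e4]

def rowl (n r : ℕ) : List (ℤ × ℤ) := (List.range n).map fun x => (Int.ofNat x, Int.ofNat r)

lemma coeM_eq (l : List ℕ) : (do let a ← l; pure ((a : ℤ)) : List ℤ) = l.map Int.ofNat := by
  show l.flatMap (fun a => [Int.ofNat a]) = l.map Int.ofNat
  rw [← List.map_eq_flatMap]

lemma pd_eq (lam : List ℕ) :
    partitionDiagram lam =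
      ((List.range lam.length).reverse.map fun r => rowl (lam.getD r 0) r).flatten := by
  unfold partitionDiagram rowl
  show List.flatten _ = _
  congr 1
  apply List.map_congr_left
  intro r _
  rw [coeM_eq, List.map_map]
  rfl

lemma mem_pd {lam : List ℕ} {x y : ℕ} (hy : y < lam.length) (hx : x < lam.getD y 0) :
    ((x : ℤ), (y : ℤ)) ∈ partitionDiagram lam := by
  rw [pd_eq]
  simp only [List.mem_flatten, List.mem_map, List.mem_reverse, List.mem_range]
  exact ⟨_, ⟨y, hy, rfl⟩, by
    simp only [rowl, List.mem_map, List.mem_range]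
    exact ⟨x, hx, rfl⟩⟩

lemma nonneg_pd {lam : List ℕ} {c : ℤ × ℤ} (hc : c ∈ partitionDiagram lam) :
    0 ≤ c.1 ∧ 0 ≤ c.2 := by
  rw [pd_eq] at hc
  simp only [List.mem_flatten, List.mem_map, List.mem_reverse, List.mem_range] at hc
  obtain ⟨_, ⟨r, hr, rfl⟩, hc⟩ := hc
  simp only [rowl, List.mem_map, List.mem_range] at hc
  obtain ⟨x, hx, rfl⟩ := hc
  exact ⟨Int.ofNat_nonneg x, Int.ofNat_nonneg r⟩

lemma pairwise_pd (lam : List ℕ) : (partitionDiagram lam).Pairwise ReadingOrder := by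
  rw [pd_eq]
  rw [List.pairwise_flatten]
  constructor
  · intro l hl
    simp only [List.mem_map, List.mem_reverse, List.mem_range] at hl
    obtain ⟨r, hr, rfl⟩ := hl
    rw [rowl, List.pairwise_map]
    exact (List.pairwise_lt_range).imp fun {a b} h =>
      Or.inr ⟨rfl, by simp only [Int.ofNat_eq_natCast]; exact_mod_cast h⟩
  · rw [List.pairwise_map, List.pairwise_reverse]
    refine (List.pairwise_lt_range).imp fun {a b} h => ?_
    intro x hx y hy
    simp only [rowl, List.mem_map, List.mem_range] at hx hy
    obtain ⟨u, _, rfl⟩ := hx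
    obtain ⟨v, _, rfl⟩ := hy
    exact Or.inl (by simp only [Int.ofNat_eq_natCast]; exact_mod_cast h)

lemma length_pd (lam : List ℕ) : (partitionDiagram lam).length = lam.sum := by
  rw [pd_eq, List.length_flatten, List.map_map, List.map_reverse, List.sum_reverse]
  have h1 : (List.range lam.length).map (List.length ∘ fun r => rowl (lam.getD r 0) r)
      = (List.range lam.length).map (fun r => lam.getD r 0) := by
    apply List.map_congr_left; intro r _; simp [rowl]
  rw [h1]
  have h2 : (List.range lam.length).map (fun r => lam.getD r 0) = lam := by
    apply List.ext_getElem (by simp)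
    intro i h1 h2
    simp only [List.getElem_map, List.getElem_range, List.getD_eq_getElem?_getD, List.getElem?_eq_getElem h2, Option.getD_some]
  rw [h2]

lemma pd_decomp (lam : List ℕ) (hL : 2 < lam.length) (h30 : 3 ≤ lam.getD 0 0)
    (h31 : 3 ≤ lam.getD 1 0) (h32 : 3 ≤ lam.getD 2 0) :
    ∃ A B C : List (ℤ × ℤ),
      partitionDiagram lam =
        A ++ ([((0:ℤ),(2:ℤ)), ((1:ℤ),(2:ℤ)), ((2:ℤ),(2:ℤ))] ++ (B ++ ([((0:ℤ),(1:ℤ))] ++ C))) ∧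
      (∀ c ∈ A, fcell c = 1) ∧ (∀ c ∈ B, fcell c = 1) ∧ (∀ c ∈ C, fcell c = 1) ∧
      5 ≤ C.length := by
  obtain ⟨K, hK⟩ : ∃ K, lam.length = 3 + K := ⟨lam.length - 3, by omega⟩
  obtain ⟨m2, hm2⟩ : ∃ m, lam.getD 2 0 = 3 + m := ⟨lam.getD 2 0 - 3, by omega⟩
  obtain ⟨m1, hm1⟩ : ∃ m, lam.getD 1 0 = 1 + m := ⟨lam.getD 1 0 - 1, by omega⟩
  refine ⟨(((List.range K).map (3 + ·)).reverse.map fun r => rowl (lam.getD r 0) r).flatten,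
    (List.range m2).map (fun x => (Int.ofNat (3 + x), (2 : ℤ))),
    ((List.range m1).map (fun x => (Int.ofNat (1 + x), (1 : ℤ)))) ++ rowl (lam.getD 0 0) 0,
    ?_, ?_, ?_, ?_, ?_⟩
  · rw [pd_eq, hK, List.range_add, List.reverse_append, List.map_append, List.flatten_append]
    congr 1
    have e3 : ((List.range 3).reverse.map fun r => rowl (lam.getD r 0) r)
        = [rowl (lam.getD 2 0) 2, rowl (lam.getD 1 0) 1, rowl (lam.getD 0 0) 0] := rfl
    rw [e3]
    have r2 : rowl (lam.getD 2 0) 2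
        = [((0:ℤ),(2:ℤ)), ((1:ℤ),(2:ℤ)), ((2:ℤ),(2:ℤ))]
          ++ (List.range m2).map (fun x => (Int.ofNat (3 + x), (2 : ℤ))) := by
      rw [rowl, hm2, List.range_add, List.map_append, List.map_map]
      rfl
    have r1 : rowl (lam.getD 1 0) 1
        = [((0:ℤ),(1:ℤ))] ++ (List.range m1).map (fun x => (Int.ofNat (1 + x), (1 : ℤ))) := by
      rw [rowl, hm1, List.range_add, List.map_append, List.map_map]
      rfl
    simp only [r2, r1]
    simp [List.append_assoc]
  · intro c hc
    simp only [List.mem_flatten, List.mem_map, List.mem_reverse, List.mem_range] at hc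
    obtain ⟨_, ⟨r, hr, rfl⟩, hc⟩ := hc
    simp only [rowl, List.mem_map, List.mem_range] at hc
    obtain ⟨u, hu, hru⟩ := hc
    obtain ⟨t, _, rfl⟩ := hr
    rw [← hru]
    exact fcell_eq_one_of
      (by intro h; rw [Int.ofNat_eq_natCast] at h; exfalso; omega)
      (by intro h; rw [Int.ofNat_eq_natCast] at h; exfalso; omega)
  · intro c hc
    simp only [List.mem_map, List.mem_range] at hc
    obtain ⟨u, hu, rfl⟩ := hc
    exact fcell_eq_one_of (fun _ => by rw [Int.ofNat_eq_natCast]; omega)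
      (by intro h; exfalso; omega)
  · intro c hc
    rw [List.mem_append] at hc
    rcases hc with hc | hc
    · simp only [List.mem_map, List.mem_range] at hc
      obtain ⟨u, hu, rfl⟩ := hc
      exact fcell_eq_one_of (by intro h; exfalso; omega)
        (fun _ => by rw [Int.ofNat_eq_natCast]; omega)
    · simp only [rowl, List.mem_map, List.mem_range] at hc
      obtain ⟨u, hu, rfl⟩ := hc
      exact fcell_eq_one_of
        (by intro h; rw [Int.ofNat_eq_natCast] at h; exfalso; omega)
        (by intro h; rw [Int.ofNat_eq_natCast] at h; exfalso; omega)
  · rw [List.length_append, List.length_map, List.length_range, rowl,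
      List.length_map, List.length_range]
    omega

end Jam333

namespace Jam333

def fcell2 (u v : ℤ) : ℕ :=
  if u = 0 ∧ v = 2 then 3 else if u = 2 ∧ v = 2 then 3
  else if u = 1 ∧ v = 2 then 2 else if u = 0 ∧ v = 1 then 2 else 1

lemma fcell_eq (c : ℤ × ℤ) : fcell c = fcell2 c.1 c.2 := by
  obtain ⟨u, v⟩ := c
  simp only [fcell, fcell2, Prod.mk.injEq]
  split_ifs <;> omega

lemma fcell2_pos (u v : ℤ) : 1 ≤ fcell2 u v := by
  unfold fcell2; split_ifs <;> omega

set_option maxHeartbeats 1600000 in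
lemma invD_zero (lam : List ℕ) (hL : 2 < lam.length) (h30 : 3 ≤ lam.getD 0 0)
    (h31 : 3 ≤ lam.getD 1 0) (h32 : 3 ≤ lam.getD 2 0) :
    invD (partitionDiagram lam) ((partitionDiagram lam).map fcell) = 0 := by
  set δ := partitionDiagram lam with hδ
  set w := δ.map fcell with hw
  have hval : ∀ j, j < δ.length → w.getD j 0 = fcell2 (δ.getD j (0,0)).1 (δ.getD j (0,0)).2 := by
    intro j h
    rw [hw, List.getD_eq_getElem _ _ (by simpa using h), List.getElem_map,
      List.getD_eq_getElem _ _ h, fcell_eq]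
  have hmemD : ∀ j, j < δ.length → δ.getD j (0,0) ∈ δ := fun j h =>
    (List.getD_eq_getElem _ _ h) ▸ List.getElem_mem h
  have hpw := pairwise_pd lam
  rw [List.pairwise_iff_getElem] at hpw
  have hRO : ∀ j k, j < δ.length → k < δ.length → j < k →
      ReadingOrder (δ.getD j (0,0)) (δ.getD k (0,0)) := by
    intro j k hj hk hjk
    rw [List.getD_eq_getElem _ _ hj, List.getD_eq_getElem _ _ hk]
    exact hpw j k hj hk hjk
  have e1 : ((Finset.range δ.length ×ˢ Finset.range δ.length).filter fun p =>
      InvTripleAt δ w p.1 p.2) = ∅ := by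
    rw [Finset.filter_eq_empty_iff]
    intro p _ hP
    obtain ⟨j, k⟩ := p
    dsimp only at hP
    obtain ⟨hjk, hk, hy, m, hm, hcm, hv⟩ := hP
    have hj : j < δ.length := lt_trans hjk hk
    have hx : (δ.getD j (0,0)).1 < (δ.getD k (0,0)).1 := by
      rcases hRO j k hj hk hjk with h | h
      · exfalso; omega
      · exact h.2
    rw [hval j hj, hval k hk, hval m hm, hcm] at hv
    dsimp only at hv
    have hnnj := nonneg_pd (hmemD j hj)
    have hnnk := nonneg_pd (hmemD k hk)
    unfold fcell2 at hv
    split_ifs at hv <;> omega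
  have e2 : ((Finset.range δ.length ×ˢ Finset.range δ.length).filter fun p =>
      InvPairBelowAt δ w p.1 p.2) = ∅ := by
    rw [Finset.filter_eq_empty_iff]
    intro p _ hP
    obtain ⟨j, k⟩ := p
    dsimp only at hP
    obtain ⟨hjk, hk, hy, hnot, hlt⟩ := hP
    have hj : j < δ.length := lt_trans hjk hk
    rw [hval j hj, hval k hk] at hlt
    have hnnj := nonneg_pd (hmemD j hj)
    have hpos := fcell2_pos (δ.getD k (0,0)).1 (δ.getD k (0,0)).2
    set cj := δ.getD j (0,0) with hcj
    -- fcell2 cj ≥ 2, so cj is one of the four special cells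
    have hsp : (cj.1 = 0 ∧ cj.2 = 2) ∨ (cj.1 = 2 ∧ cj.2 = 2)
        ∨ (cj.1 = 1 ∧ cj.2 = 2) ∨ (cj.1 = 0 ∧ cj.2 = 1) := by
      by_contra hcon
      push_neg at hcon
      have : fcell2 cj.1 cj.2 = 1 := by unfold fcell2; split_ifs <;> omega
      omega
    apply hnot
    rcases hsp with ⟨hu, hv2⟩ | ⟨hu, hv2⟩ | ⟨hu, hv2⟩ | ⟨hu, hv2⟩
    · have : (cj.1, cj.2 - 1) = (((0:ℕ):ℤ), ((1:ℕ):ℤ)) := by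
        rw [Prod.ext_iff]; constructor <;> simp <;> omega
      rw [this, hδ]; exact mem_pd (by omega) (by omega)
    · have : (cj.1, cj.2 - 1) = (((2:ℕ):ℤ), ((1:ℕ):ℤ)) := by
        rw [Prod.ext_iff]; constructor <;> simp <;> omega
      rw [this, hδ]; exact mem_pd (by omega) (by omega)
    · have : (cj.1, cj.2 - 1) = (((1:ℕ):ℤ), ((1:ℕ):ℤ)) := by
        rw [Prod.ext_iff]; constructor <;> simp <;> omega
      rw [this, hδ]; exact mem_pd (by omega) (by omega)
    · have : (cj.1, cj.2 - 1) = (((0:ℕ):ℤ), ((0:ℕ):ℤ)) := by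
        rw [Prod.ext_iff]; constructor <;> simp <;> omega
      rw [this, hδ]; exact mem_pd (by omega) (by omega)
  have e3 : ((Finset.range δ.length ×ˢ Finset.range δ.length).filter fun p =>
      InvPairAboveAt δ w p.1 p.2) = ∅ := by
    rw [Finset.filter_eq_empty_iff]
    intro p _ hP
    obtain ⟨k, m⟩ := p
    dsimp only at hP
    obtain ⟨hk, hm, hy, hx, hnot, hlt⟩ := hP
    rw [hval k hk, hval m hm] at hlt
    have hnnm := nonneg_pd (hmemD m hm)
    have hposm := fcell2_pos (δ.getD m (0,0)).1 (δ.getD m (0,0)).2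
    set ck := δ.getD k (0,0) with hck
    set cm := δ.getD m (0,0) with hcm'
    have hsp : (ck.1 = 0 ∧ ck.2 = 2) ∨ (ck.1 = 2 ∧ ck.2 = 2)
        ∨ (ck.1 = 1 ∧ ck.2 = 2) ∨ (ck.1 = 0 ∧ ck.2 = 1) := by
      by_contra hcon
      push_neg at hcon
      have : fcell2 ck.1 ck.2 = 1 := by unfold fcell2; split_ifs <;> omega
      omega
    apply hnot
    rcases hsp with ⟨hu, hv2⟩ | ⟨hu, hv2⟩ | ⟨hu, hv2⟩ | ⟨hu, hv2⟩
    · exfalso; omega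
    · -- ck = (2,2): cm.2 = 1, 0 ≤ cm.1 < 2
      rcases (show cm.1 = 0 ∨ cm.1 = 1 by omega) with h0 | h0
      · have : (cm.1, cm.2 + 1) = (((0:ℕ):ℤ), ((2:ℕ):ℤ)) := by
          rw [Prod.ext_iff]; constructor <;> simp <;> omega
        rw [this, hδ]; exact mem_pd (by omega) (by omega)
      · have : (cm.1, cm.2 + 1) = (((1:ℕ):ℤ), ((2:ℕ):ℤ)) := by
          rw [Prod.ext_iff]; constructor <;> simp <;> omega
        rw [this, hδ]; exact mem_pd (by omega) (by omega)
    · -- ck = (1,2): cm.1 = 0, cm.2 = 1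
      have : (cm.1, cm.2 + 1) = (((0:ℕ):ℤ), ((2:ℕ):ℤ)) := by
        rw [Prod.ext_iff]; constructor <;> simp <;> omega
      rw [this, hδ]; exact mem_pd (by omega) (by omega)
    · exfalso; omega
  unfold invD
  rw [e1, e2, e3]
  simp

end Jam333

namespace Jam333

lemma count_one_eq {l : List ℕ} (h : ∀ x ∈ l, x = 1) : l.count 1 = l.length :=
  List.count_eq_length.2 fun b hb => (h b hb).symm

lemma count_eq_zero_of_ones {l : List ℕ} (h : ∀ x ∈ l, x = 1) {k : ℕ} (hk : k ≠ 1) :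
    l.count k = 0 :=
  List.count_eq_zero.2 fun hm => hk (h _ hm)

variable {A B C : List ℕ}

lemma count_wform (hA : ∀ x ∈ A, x = 1) (hB : ∀ x ∈ B, x = 1) (hC : ∀ x ∈ C, x = 1) :
    (A ++ ([3, 2, 3] ++ (B ++ ([2] ++ C)))).count 1 = A.length + B.length + C.length ∧
    (A ++ ([3, 2, 3] ++ (B ++ ([2] ++ C)))).count 2 = 2 ∧
    (A ++ ([3, 2, 3] ++ (B ++ ([2] ++ C)))).count 3 = 2 ∧
    ∀ k, k ≠ 1 → k ≠ 2 → k ≠ 3 → (A ++ ([3, 2, 3] ++ (B ++ ([2] ++ C)))).count k = 0 := by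
  refine ⟨?_, ?_, ?_, fun k h1 h2 h3 => ?_⟩
  · simp [List.count_append, count_one_eq hA, count_one_eq hB, count_one_eq hC]; omega
  · simp [List.count_append, count_eq_zero_of_ones hA (by norm_num : (2:ℕ) ≠ 1),
      count_eq_zero_of_ones hB (by norm_num : (2:ℕ) ≠ 1),
      count_eq_zero_of_ones hC (by norm_num : (2:ℕ) ≠ 1)]
  · simp [List.count_append, count_eq_zero_of_ones hA (by norm_num : (3:ℕ) ≠ 1),
      count_eq_zero_of_ones hB (by norm_num : (3:ℕ) ≠ 1),
      count_eq_zero_of_ones hC (by norm_num : (3:ℕ) ≠ 1)]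
  · simp [List.count_append, count_eq_zero_of_ones hA h1,
      count_eq_zero_of_ones hB h1, count_eq_zero_of_ones hC h1,
      List.count_cons, h1, h2, h3, Ne.symm h2, Ne.symm h3]

lemma yam_wform (hA : ∀ x ∈ A, x = 1) (hB : ∀ x ∈ B, x = 1) (hC : ∀ x ∈ C, x = 1)
    (hClen : 2 ≤ C.length) :
    ∀ t, t <:+ (A ++ ([3, 2, 3] ++ (B ++ ([2] ++ C)))) →
      ∀ i : ℕ, t.count (i + 2) ≤ t.count (i + 1) := by
  intro t ht i
  obtain ⟨cw1, cw2, cw3, cw0⟩ := count_wform hA hB hC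
  set w := A ++ ([3, 2, 3] ++ (B ++ ([2] ++ C))) with hwdef
  match i with
  | 0 =>
    show t.count 2 ≤ t.count 1
    have hCs : C <:+ w := ⟨A ++ [3,2,3] ++ B ++ [2], by simp [hwdef]⟩
    rcases List.suffix_or_suffix_of_suffix ht hCs with h | h
    · have : t.count 2 ≤ C.count 2 := h.sublist.count_le _
      have hc2 : C.count 2 = 0 := count_eq_zero_of_ones hC (by norm_num)
      omega
    · have h1 : C.count 1 ≤ t.count 1 := h.sublist.count_le _
      have h2 : t.count 2 ≤ w.count 2 := ht.sublist.count_le _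
      have h3 : C.count 1 = C.length := count_one_eq hC
      omega
  | 1 =>
    show t.count 3 ≤ t.count 2
    have hS1 : ([2] ++ C) <:+ w := ⟨A ++ [3,2,3] ++ B, by simp [hwdef]⟩
    have hS2 : ([2] ++ ([3] ++ (B ++ ([2] ++ C)))) <:+ w := ⟨A ++ [3], by simp [hwdef]⟩
    have cS1_3 : ([2] ++ C).count 3 = 0 := by
      simp [List.count_append, count_eq_zero_of_ones hC (by norm_num : (3:ℕ) ≠ 1)]
    have cS1_2 : 1 ≤ ([2] ++ C).count 2 := by simp [List.count_append]
    have cS2_3 : ([2] ++ ([3] ++ (B ++ ([2] ++ C)))).count 3 = 1 := by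
      simp [List.count_append, count_eq_zero_of_ones hB (by norm_num : (3:ℕ) ≠ 1),
        count_eq_zero_of_ones hC (by norm_num : (3:ℕ) ≠ 1)]
    have cS2_2 : ([2] ++ ([3] ++ (B ++ ([2] ++ C)))).count 2 = 2 := by
      simp [List.count_append, count_eq_zero_of_ones hB (by norm_num : (2:ℕ) ≠ 1),
        count_eq_zero_of_ones hC (by norm_num : (2:ℕ) ≠ 1)]
    rcases List.suffix_or_suffix_of_suffix ht hS2 with h | h
    · rcases List.suffix_or_suffix_of_suffix ht hS1 with h1 | h1
      · have := h1.sublist.count_le 3; omega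
      · have e1 := h1.sublist.count_le 2
        have e2 := h.sublist.count_le 3
        omega
    · have e1 := h.sublist.count_le 2
      have e2 := ht.sublist.count_le 3
      omega
  | (n + 2) =>
    show t.count (n + 4) ≤ t.count (n + 3)
    have : t.count (n + 4) ≤ w.count (n + 4) := ht.sublist.count_le _
    have := cw0 (n + 4) (by omega) (by omega) (by omega)
    omega

end Jam333

namespace Jam333

lemma eq_pair {l : List ℕ} (hl : l.Pairwise (· < ·)) {p q : ℕ} (hpq : p < q)
    (h : ∀ x, x ∈ l ↔ (x = p ∨ x = q)) : l = [p, q] := by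
  have hn : l.Nodup := hl.imp fun {a b} hab => Nat.ne_of_lt hab
  have hn2 : ([p, q] : List ℕ).Nodup := by simp [Nat.ne_of_lt hpq]
  have hsub : l ⊆ [p, q] := by intro x hx; rcases (h x).1 hx with rfl | rfl <;> simp
  have hsub2 : ([p, q] : List ℕ) ⊆ l := by
    intro x hx; simp at hx; rcases hx with rfl | rfl
    · exact (h x).2 (Or.inl rfl)
    · exact (h x).2 (Or.inr rfl)
  have hperm : l.Perm [p, q] :=
    (List.subperm_of_subset hn hsub).antisymm (List.subperm_of_subset hn2 hsub2)
  exact List.Perm.eq_of_pairwise' (hl.imp fun {a b} hab => Nat.le_of_lt hab)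
    (by simp [Nat.le_of_lt hpq] : List.Pairwise (· ≤ ·) [p, q]) hperm

lemma filter_eq_pair {w : List ℕ} {v p q : ℕ} (hpq : p < q)
    (h : ∀ x, (x < w.length ∧ w.getD x 0 = v) ↔ (x = p ∨ x = q)) :
    ((List.range w.length).filter fun x => w.getD x 0 = v) = [p, q] := by
  apply eq_pair _ hpq
  · intro x
    rw [List.mem_filter, List.mem_range]
    simp only [decide_eq_true_eq]
    exact h x
  · exact List.Pairwise.sublist (List.filter_sublist) (List.pairwise_lt_range)

variable {A B C : List ℕ}

lemma getD_wform (hA : ∀ x ∈ A, x = 1) (hB : ∀ x ∈ B, x = 1) (hC : ∀ x ∈ C, x = 1)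
    (p : ℕ) :
    (A ++ ([3, 2, 3] ++ (B ++ ([2] ++ C)))).getD p 0 =
      if p < A.length then 1
      else if p = A.length then 3
      else if p = A.length + 1 then 2
      else if p = A.length + 2 then 3
      else if p < A.length + 3 + B.length then 1
      else if p = A.length + 3 + B.length then 2
      else if p < A.length + 4 + B.length + C.length then 1
      else 0 := by
  split_ifs with h1 h2 h3 h4 h5 h6 h7
  · rw [List.getD_append _ _ _ _ h1, List.getD_eq_getElem _ _ h1]
    exact hA _ (List.getElem_mem h1)
  · subst h2
    rw [List.getD_append_right _ _ _ _ (le_refl _), Nat.sub_self]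
    rfl
  · subst h3
    rw [List.getD_append_right _ _ _ _ (by omega)]
    have : A.length + 1 - A.length = 1 := by omega
    rw [this]; rfl
  · subst h4
    rw [List.getD_append_right _ _ _ _ (by omega)]
    have : A.length + 2 - A.length = 2 := by omega
    rw [this]; rfl
  · rw [List.getD_append_right _ _ _ _ (by omega)]
    have h3le : (3:ℕ) ≤ p - A.length := by omega
    rw [show ([3,2,3] : List ℕ) ++ (B ++ ([2] ++ C)) = [(3:ℕ),2,3] ++ (B ++ ([2] ++ C)) from rfl]
    rw [List.getD_append_right [3,2,3] _ _ _ (by simpa using h3le)]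
    have hb : p - A.length - [(3:ℕ),2,3].length < B.length := by simp; omega
    rw [List.getD_append _ _ _ _ hb, List.getD_eq_getElem _ _ hb]
    exact hB _ (List.getElem_mem hb)
  · subst h6
    rw [List.getD_append_right _ _ _ _ (by omega)]
    rw [List.getD_append_right [3,2,3] _ _ _ (by simp; omega)]
    rw [List.getD_append_right B _ _ _ (by simp; omega)]
    have : A.length + 3 + B.length - A.length - [(3:ℕ),2,3].length - B.length = 0 := by
      simp; omega
    rw [this]; rfl
  · rw [List.getD_append_right _ _ _ _ (by omega)]
    rw [List.getD_append_right [3,2,3] _ _ _ (by simp; omega)]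
    rw [List.getD_append_right B _ _ _ (by simp; omega)]
    rw [List.getD_append_right [2] _ _ _ (by simp; omega)]
    have hc : p - A.length - [(3:ℕ),2,3].length - B.length - [(2:ℕ)].length < C.length := by
      simp; omega
    rw [List.getD_eq_getElem _ _ hc]
    exact hC _ (List.getElem_mem hc)
  · apply List.getD_eq_default
    simp; omega

lemma length_wform : (A ++ ([3, 2, 3] ++ (B ++ ([2] ++ C)))).length
    = A.length + 4 + B.length + C.length := by simp; omega

lemma posFromLast_wform (hA : ∀ x ∈ A, x = 1) (hB : ∀ x ∈ B, x = 1) (hC : ∀ x ∈ C, x = 1) :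
    posFromLast (A ++ ([3, 2, 3] ++ (B ++ ([2] ++ C)))) 2 1 = A.length + 3 + B.length ∧
    posFromLast (A ++ ([3, 2, 3] ++ (B ++ ([2] ++ C)))) 3 2 = A.length := by
  have hlen := (length_wform : (A ++ ([3, 2, 3] ++ (B ++ ([2] ++ C)))).length = _)
  constructor
  · unfold posFromLast
    rw [filter_eq_pair (show A.length + 1 < A.length + 3 + B.length by omega)
      (fun x => by rw [getD_wform hA hB hC x]; split_ifs <;> omega)]
    rfl
  · unfold posFromLast
    rw [filter_eq_pair (show A.length < A.length + 2 by omega)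
      (fun x => by rw [getD_wform hA hB hC x]; split_ifs <;> omega)]
    rfl

end Jam333

-- STATEMENT 14
theorem contains333_jamming_yam (lam : List ℕ) (hlam : IsPartition lam)
    (h333 : 3 ≤ lam.getD 2 0) :
    ∃ lam' : List ℕ, IsPartition lam' ∧ lam'.sum = lam.sum ∧
      ∀ w : List ℕ,
        w = (partitionDiagram lam).map (fun c =>
          if c = ((0 : ℤ), (2 : ℤ)) ∨ c = ((2 : ℤ), (2 : ℤ)) then 3
          else if c = ((1 : ℤ), (2 : ℤ)) ∨ c = ((0 : ℤ), (1 : ℤ)) then 2 else 1) →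
        IsYam lam' w ∧ invD (partitionDiagram lam) w = 0 ∧
        Jams (partitionDiagram lam) w := by
  classical
  have hL : 2 < lam.length := by
    by_contra h
    push_neg at h
    rw [List.getD_eq_default _ _ h] at h333
    omega
  have hsort := hlam.1
  rw [List.pairwise_iff_getElem] at hsort
  have h32 : 3 ≤ lam.getD 2 0 := h333
  have e2' : lam.getD 2 0 = lam[2]'hL := List.getD_eq_getElem lam 0 hL
  have h30 : 3 ≤ lam.getD 0 0 := by
    have h02 := hsort 0 2 (by omega) hL (by omega)
    have e0 : lam.getD 0 0 = lam[0]'(by omega) := List.getD_eq_getElem lam 0 (by omega)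
    omega
  have h31 : 3 ≤ lam.getD 1 0 := by
    have h12 := hsort 1 2 (by omega) hL (by omega)
    have e1 : lam.getD 1 0 = lam[1]'(by omega) := List.getD_eq_getElem lam 0 (by omega)
    omega
  obtain ⟨A, B, C, hdec, hA1, hB1, hC1, hC5⟩ := Jam333.pd_decomp lam hL h30 h31 h32
  have hlen : (partitionDiagram lam).length = lam.sum := Jam333.length_pd lam
  have hlen2 : (partitionDiagram lam).length = A.length + 4 + B.length + C.length := by
    rw [hdec]
    simp only [List.length_append, List.length_cons]
    simp
    omega
  have hsum9 : 9 ≤ lam.sum := by omega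
  refine ⟨[lam.sum - 4, 2, 2], ⟨?_, ?_⟩, ?_, ?_⟩
  · simp only [List.pairwise_cons, List.mem_cons, List.not_mem_nil, or_false,
      List.Pairwise.nil, and_true, forall_eq_or_imp, forall_eq]
    exact ⟨⟨by omega, by omega⟩, by omega, fun b h => h.elim⟩
  · intro a ha
    simp only [List.mem_cons, List.not_mem_nil, or_false] at ha
    rcases ha with rfl | rfl | rfl <;> omega
  · simp only [List.sum_cons, List.sum_nil]
    omega
  · intro w hw
    have hfc : (fun c : ℤ × ℤ =>
        if c = ((0 : ℤ), (2 : ℤ)) ∨ c = ((2 : ℤ), (2 : ℤ)) then 3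
        else if c = ((1 : ℤ), (2 : ℤ)) ∨ c = ((0 : ℤ), (1 : ℤ)) then 2 else 1)
        = Jam333.fcell := rfl
    rw [hfc] at hw
    subst hw
    have e02 : Jam333.fcell ((0:ℤ),(2:ℤ)) = 3 := by simp [Jam333.fcell]
    have e22 : Jam333.fcell ((2:ℤ),(2:ℤ)) = 3 := by simp [Jam333.fcell]
    have e12 : Jam333.fcell ((1:ℤ),(2:ℤ)) = 2 := by
      simp [Jam333.fcell, Prod.ext_iff]
    have e01 : Jam333.fcell ((0:ℤ),(1:ℤ)) = 2 := by
      simp [Jam333.fcell, Prod.ext_iff]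
    have hwform : (partitionDiagram lam).map Jam333.fcell
        = (A.map Jam333.fcell) ++ ([3, 2, 3] ++
            ((B.map Jam333.fcell) ++ ([2] ++ (C.map Jam333.fcell)))) := by
      rw [hdec]
      simp only [List.map_append, List.map_cons, List.map_nil, e02, e22, e12, e01]
    have haA : ∀ x ∈ A.map Jam333.fcell, x = 1 := by
      intro x hx
      obtain ⟨c, hc, rfl⟩ := List.mem_map.1 hx
      exact hA1 c hc
    have haB : ∀ x ∈ B.map Jam333.fcell, x = 1 := by
      intro x hx
      obtain ⟨c, hc, rfl⟩ := List.mem_map.1 hx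
      exact hB1 c hc
    have haC : ∀ x ∈ C.map Jam333.fcell, x = 1 := by
      intro x hx
      obtain ⟨c, hc, rfl⟩ := List.mem_map.1 hx
      exact hC1 c hc
    obtain ⟨cw1, cw2, cw3, cw0⟩ := Jam333.count_wform haA haB haC
    refine ⟨⟨?_, ?_, ?_⟩, ?_, ?_⟩
    · -- all letters positive
      intro x hx
      obtain ⟨c, _, rfl⟩ := List.mem_map.1 hx
      exact Jam333.fcell_pos c
    · -- content
      intro i
      rw [hwform]
      match i with
      | 0 =>
        rw [cw1]
        simp only [List.getD_cons_zero]
        simp only [List.length_map]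
        omega
      | 1 => rw [cw2]; rfl
      | 2 => rw [cw3]; rfl
      | (n + 3) =>
        rw [cw0 (n + 4) (by omega) (by omega) (by omega)]
        rfl
    · -- Yamanouchi suffix condition
      intro t ht i
      rw [hwform] at ht
      exact Jam333.yam_wform haA haB haC (by simp; omega) t ht i
    · -- inv = 0
      exact Jam333.invD_zero lam hL h30 h31 h32
    · -- jams
      obtain ⟨hp2, hp3⟩ := Jam333.posFromLast_wform haA haB haC
      refine ⟨2, 1, by norm_num, by norm_num, ?_, ?_, ?_⟩
      · rw [hwform, cw2]; omega
      · rw [hwform, cw3]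
      · rw [hwform, hp2, hp3]
        simp only [List.length_map]
        have hg1 : (partitionDiagram lam).getD A.length ((0:ℤ),(0:ℤ)) = ((0:ℤ),(2:ℤ)) := by
          rw [hdec, List.getD_append_right _ _ _ _ (le_refl _), Nat.sub_self]
          rfl
        have hg2 : (partitionDiagram lam).getD (A.length + 3 + B.length) ((0:ℤ),(0:ℤ))
            = ((0:ℤ),(1:ℤ)) := by
          rw [hdec, List.getD_append_right _ _ _ _ (by omega)]
          rw [show [((0:ℤ),(2:ℤ)), ((1:ℤ),(2:ℤ)), ((2:ℤ),(2:ℤ))] ++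
              (B ++ ([((0:ℤ),(1:ℤ))] ++ C))
            = ([((0:ℤ),(2:ℤ)), ((1:ℤ),(2:ℤ)), ((2:ℤ),(2:ℤ))] : List (ℤ × ℤ)) ++
              (B ++ ([((0:ℤ),(1:ℤ))] ++ C)) from rfl]
          rw [List.getD_append_right [((0:ℤ),(2:ℤ)), ((1:ℤ),(2:ℤ)), ((2:ℤ),(2:ℤ))] _ _ _
            (by simp; omega)]
          rw [List.getD_append_right B _ _ _ (by simp; omega)]
          have hz : A.length + 3 + B.length - A.length -
              ([((0:ℤ),(2:ℤ)), ((1:ℤ),(2:ℤ)), ((2:ℤ),(2:ℤ))] : List (ℤ × ℤ)).length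
              - B.length = 0 := by
            simp
            omega
          rw [hz]
          rfl
        have pist1 : InPistol ((0:ℤ),(2:ℤ)) ((0:ℤ),(2:ℤ)) :=
          ⟨Or.inl rfl, Or.inr (Or.inl (by norm_num))⟩
        have pist2 : InPistol ((0:ℤ),(2:ℤ)) ((0:ℤ),(1:ℤ)) :=
          ⟨Or.inr (Or.inl (by norm_num)), Or.inl (by norm_num)⟩
        refine ⟨((0:ℤ),(2:ℤ)), ?_, ?_⟩
        · have := Jam333.mem_pd (lam := lam) (x := 0) (y := 2) hL (by omega)
          simpa using this
        · intro i hi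
          simp only [List.mem_cons, List.not_mem_nil, or_false] at hi
          rcases hi with rfl | rfl
          · exact ⟨by omega, hg2 ▸ pist2⟩
          · exact ⟨by omega, hg1 ▸ pist1⟩
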